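/- arXiv:2306.13226 — 4 statements merged into one kernel-verified Lean document; each statement's English description precedes it below -/
import Mathlib

section
/- Let D be the Toom rule. Let a, b ∈ ℤ and let c ≥ 1 be an integer. Suppose ξ: ℤ² → {0,1} satisfies ξ(x,y) = 0 whenever x < a or y < b or x + y > a + b + c. Then (Dξ)(x,y) = 0 whenever x < a or y < b or x + y > a + b + c − 1; that is, one application of the Toom rule shrinks the enclosing right triangle of an island by one. -/
/-- Majority of three booleans: the value taken by at least two of them. -/
def maj (a b c : Bool) : Bool := (a && b) || (a && c) || (b && c)

/-- The Toom rule: majority over self, north and east neighbors. -/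
def toomRule (ξ : ℤ × ℤ → Bool) : ℤ × ℤ → Bool :=
  fun p => maj (ξ p) (ξ (p.1, p.2 + 1)) (ξ (p.1 + 1, p.2))

/-- One application of the Toom rule shrinks the enclosing right triangle
of an island by one. -/
theorem toom_shrinks_triangle (a b c : ℤ) (hc : 1 ≤ c) (ξ : ℤ × ℤ → Bool)
    (h : ∀ x y : ℤ, (x < a ∨ y < b ∨ x + y > a + b + c) → ξ (x, y) = false) :
    ∀ x y : ℤ, (x < a ∨ y < b ∨ x + y > a + b + c - 1) →
      toomRule ξ (x, y) = false := by
  intro x y hxy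
  simp only [toomRule, maj]
  rcases hxy with hx | hy | hs
  · rw [h x y (Or.inl hx), h x (y + 1) (Or.inl hx)]
    simp
  · rw [h x y (Or.inr (Or.inl hy)), h (x + 1) y (Or.inr (Or.inl hy))]
    simp
  · rw [h x (y + 1) (Or.inr (Or.inr (by omega))),
      h (x + 1) y (Or.inr (Or.inr (by omega)))]
    simp
end

section
/- Let D be the Toom rule. If a, b ∈ ℤ, c ≥ 0 is an integer, and ξ: ℤ² → {0,1} satisfies ξ(x,y) = 0 whenever x < a or y < b or x + y > a + b + c, then D^{c+1} ξ is identically 0. In particular, the Toom rule is an eroder: every configuration with finite support is mapped to the all-zero configuration after finitely many iterations of D. -/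
lemma toom_one_step (a b s : ℤ) (ξ : ℤ × ℤ → Bool)
    (h : ∀ x y : ℤ, (x < a ∨ y < b ∨ x + y > s) → ξ (x, y) = false) :
    ∀ x y : ℤ, (x < a ∨ y < b ∨ x + y > s - 1) → toomRule ξ (x, y) = false := by
  intro x y hxy
  show maj (ξ (x, y)) (ξ (x, y + 1)) (ξ (x + 1, y)) = false
  rcases hxy with hx | hy | hs
  · rw [h x y (Or.inl hx), h x (y + 1) (Or.inl hx)]
    simp [maj]
  · rw [h x y (Or.inr (Or.inl hy)), h (x + 1) y (Or.inr (Or.inl hy))]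
    simp [maj]
  · rw [h x (y + 1) (Or.inr (Or.inr (by omega))),
      h (x + 1) y (Or.inr (Or.inr (by omega)))]
    simp [maj]

lemma toom_iter (n : ℕ) : ∀ (a b s : ℤ) (ξ : ℤ × ℤ → Bool),
    (∀ x y : ℤ, (x < a ∨ y < b ∨ x + y > s) → ξ (x, y) = false) →
    ∀ x y : ℤ, (x < a ∨ y < b ∨ x + y > s - n) → toomRule^[n] ξ (x, y) = false := by
  induction n with
  | zero => intro a b s ξ h x y hxy; simpa using h x y (by push_cast at hxy; omega)
  | succ n ih =>
    intro a b s ξ h x y hxy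
    rw [Function.iterate_succ_apply]
    exact ih a b (s - 1) (toomRule ξ) (toom_one_step a b s ξ h) x y
      (by push_cast at hxy ⊢; omega)

/-- If an island is contained in the right triangle determined by `a`, `b`, `c`,
then `c + 1` applications of the Toom rule erase it; in particular the Toom rule
is an eroder: every finitely supported configuration is erased in finitely many steps. -/
theorem toom_is_eroder :
    (∀ (a b : ℤ) (c : ℕ) (ξ : ℤ × ℤ → Bool),
      (∀ x y : ℤ, (x < a ∨ y < b ∨ x + y > a + b + (c : ℤ)) → ξ (x, y) = false) →
      toomRule^[c + 1] ξ = fun _ => false) ∧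
    (∀ ξ : ℤ × ℤ → Bool, Set.Finite {p | ξ p = true} →
      ∃ t : ℕ, toomRule^[t] ξ = fun _ => false) := by
  have main : ∀ (a b : ℤ) (c : ℕ) (ξ : ℤ × ℤ → Bool),
      (∀ x y : ℤ, (x < a ∨ y < b ∨ x + y > a + b + (c : ℤ)) → ξ (x, y) = false) →
      toomRule^[c + 1] ξ = fun _ => false := by
    intro a b c ξ h
    funext p
    obtain ⟨x, y⟩ := p
    refine toom_iter (c + 1) a b (a + b + c) ξ h x y ?_
    push_cast
    omega
  refine ⟨main, ?_⟩
  intro ξ hfin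
  classical
  set S := hfin.toFinset with hS
  by_cases hne : S.Nonempty
  · set a := (S.image Prod.fst).min' (hne.image _) with ha
    set b := (S.image Prod.snd).min' (hne.image _) with hb
    set m := (S.image (fun p => p.1 + p.2)).max' (hne.image _) with hm
    refine ⟨(m - a - b).toNat + 1, main a b (m - a - b).toNat ξ ?_⟩
    intro x y hxy
    by_contra hval
    have hmem : (x, y) ∈ S := by
      simp [hS, Set.Finite.mem_toFinset]
      revert hval; cases ξ (x, y) <;> simp
    have h1 : a ≤ x := Finset.min'_le _ _ (Finset.mem_image_of_mem _ hmem)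
    have h2 : b ≤ y := Finset.min'_le _ _ (Finset.mem_image_of_mem _ hmem)
    have h3 : x + y ≤ m := Finset.le_max' _ _ (Finset.mem_image_of_mem (fun p => p.1 + p.2) hmem)
    have h4 : (m - a - b) ≤ ((m - a - b).toNat : ℤ) := Int.self_le_toNat _
    omega
  · refine ⟨0, ?_⟩
    funext p
    simp only [Function.iterate_zero, id]
    by_contra hval
    exact hne ⟨p, by simp [hS, Set.Finite.mem_toFinset]; revert hval; cases ξ p <;> simp⟩
end

section
/- The two-dimensional binary cellular automaton with transition (Dξ)(x) = (ξ(x) ∨ ξ(x+(1,1))) ∧ (ξ(x+(0,1)) ∨ ξ(x+(1,0))) is not an eroder: there exists a configuration ξ with finite support such that D^t ξ is not identically 0 for any t. (Its minimal null sets are {(0,0),(1,1)} and {(0,1),(1,0)}, so σ = {(1/2,1/2)} is nonempty even though it contains no point of ℤ².) -/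
/-- The two-dimensional rule `(Dξ)(x) = (ξ(x) ∨ ξ(x+(1,1))) ∧ (ξ(x+(0,1)) ∨ ξ(x+(1,0)))`. -/
def diagRule (ξ : ℤ × ℤ → Bool) : ℤ × ℤ → Bool :=
  fun p => (ξ p || ξ (p.1 + 1, p.2 + 1)) && (ξ (p.1, p.2 + 1) || ξ (p.1 + 1, p.2))

/-- The `2 × 2` square with lower-left corner `(a, a)`. -/
def sqCfg (a : ℤ) : ℤ × ℤ → Bool :=
  fun p => decide ((p.1 = a ∨ p.1 = a + 1) ∧ (p.2 = a ∨ p.2 = a + 1))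

/-- The plus shape centered at `(a, a)`. -/
def plusCfg (a : ℤ) : ℤ × ℤ → Bool :=
  fun p => decide (((p.1 = a - 1 ∨ p.1 = a + 1) ∧ p.2 = a) ∨
    (p.1 = a ∧ (p.2 = a - 1 ∨ p.2 = a ∨ p.2 = a + 1)))

lemma diag_sq (a : ℤ) : diagRule (sqCfg a) = plusCfg a := by
  funext p
  simp only [diagRule, sqCfg, plusCfg, ← Bool.decide_or, ← Bool.decide_and]
  exact decide_eq_decide.mpr (by omega)

lemma diag_plus (a : ℤ) : diagRule (plusCfg a) = sqCfg (a - 1) := by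
  funext p
  simp only [diagRule, sqCfg, plusCfg, ← Bool.decide_or, ← Bool.decide_and]
  exact decide_eq_decide.mpr (by omega)

lemma diag_zero : diagRule (fun _ => false) = fun _ => false := by
  funext p; simp [diagRule]

lemma diag_iter_sq (t : ℕ) : diagRule^[2 * t] (sqCfg 0) = sqCfg (-(t : ℤ)) := by
  induction t with
  | zero => simp
  | succ n ih =>
      have : 2 * (n + 1) = 2 * n + 1 + 1 := by ring
      rw [this, Function.iterate_succ_apply', Function.iterate_succ_apply', ih,
        diag_sq, diag_plus]
      push_cast
      ring_nf

/-- This automaton is not an eroder: some configuration with finite support is never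
erased by iterating the rule. -/
theorem diagRule_not_eroder :
    ∃ ξ : ℤ × ℤ → Bool, Set.Finite {p | ξ p = true} ∧
      ∀ t : ℕ, diagRule^[t] ξ ≠ fun _ => false := by
  refine ⟨sqCfg 0, ?_, ?_⟩
  · apply Set.Finite.subset (Set.finite_Icc ((0 : ℤ), (0 : ℤ)) (1, 1))
    intro p hp
    simp only [Set.mem_setOf_eq, sqCfg, decide_eq_true_eq] at hp
    constructor <;> constructor <;> simp <;> omega
  · intro t h
    have h2 : diagRule^[2 * t] (sqCfg 0) = fun _ => false := by
      have : 2 * t = t + t := by ring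
      rw [this, Function.iterate_add_apply, h]
      exact Function.iterate_fixed diag_zero t
    rw [diag_iter_sq] at h2
    have := congrFun h2 (-(t : ℤ), -(t : ℤ))
    simp [sqCfg] at this
end

section
/- In one dimension, no monotone binary cellular automaton and its dual are both eroders: if A is a monotone binary cellular automaton on ℤ with finite neighborhood, transition function g satisfying g(all-zero) = 0 and g(all-one) = 1, and A is an eroder, then the dual automaton A* (with transition function g*(u) = 1 − g(1 − u)) is not an eroder. -/
/-!
If `g(H_k) = g(L_k) = 1` for the up-step `H_k = 1_{[k,∞)}` and the down-step `L_k = 1_{(-∞,k]}`,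
then a block of ones of width twice the radius of the neighbourhood survives forever, moving with
velocity `-k`: the left half of its image sees (on the neighbourhood) at least `H_k`, the right
half at least `L_k`. So an eroder `g` has no such `k`. On the other hand `k ↦ g(H_k)` switches
from `1` to `0` at some `k`, and then `g(L_k) = 0`; complementation exchanges `H_k` with `L_{k-1}`
and `L_k` with `H_{k+1}`, so the dual satisfies `g*(H_k) = g*(L_k) = 1` and is not an eroder.
-/

/-- The transition operator of a one-dimensional cellular automaton with transition
function `g`: `(Dξ)(x) = g(u ↦ ξ(x+u))`. -/
def transOp1 (g : (ℤ → Bool) → Bool) (ξ : ℤ → Bool) : ℤ → Bool :=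
  fun x => g (fun u => ξ (x + u))

namespace CellularAutomaton

open Set Function

def HasNeighborhood (U : Finset ℤ) (g : (ℤ → Bool) → Bool) : Prop :=
  ∀ ξ ξ' : ℤ → Bool, (∀ u ∈ U, ξ u = ξ' u) → g ξ = g ξ'

def IsEroder (g : (ℤ → Bool) → Bool) : Prop :=
  ∀ ξ : ℤ → Bool, {x | ξ x = true}.Finite → ∃ t : ℕ, (transOp1 g)^[t] ξ = fun _ => false

def dual (g : (ℤ → Bool) → Bool) : (ℤ → Bool) → Bool :=
  fun u => !g (fun s => !u s)

def upStep (k : ℤ) : ℤ → Bool := fun u => decide (k ≤ u)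

def downStep (k : ℤ) : ℤ → Bool := fun u => decide (u ≤ k)

variable {U : Finset ℤ} {g : (ℤ → Bool) → Bool}

theorem exists_radius (U : Finset ℤ) : ∃ r : ℕ, ∀ u ∈ U, -(r : ℤ) ≤ u ∧ u ≤ r :=
  ⟨U.sup Int.natAbs, fun u hu => by have := Finset.le_sup (f := Int.natAbs) hu; omega⟩

theorem HasNeighborhood.dual (hU : HasNeighborhood U g) : HasNeighborhood U (dual g) :=
  fun _ _ h => congrArg (!·) (hU _ _ fun u hu => by rw [h u hu])

theorem monotone_dual (hg : Monotone g) : Monotone (dual g) :=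
  fun _ _ hab => compl_le_compl (hg fun s => compl_le_compl (hab s))

theorem HasNeighborhood.apply_le_apply (hU : HasNeighborhood U g) (hg : Monotone g)
    {ξ ξ' : ℤ → Bool} (h : ∀ u ∈ U, ξ u ≤ ξ' u) : g ξ ≤ g ξ' :=
  calc g ξ = g (ξ ⊓ ξ') := hU _ _ fun u hu => (inf_eq_left.2 (h u hu)).symm
    _ ≤ g ξ' := hg inf_le_right

theorem downStep_mono : Monotone downStep := fun a b hab u => by
  by_cases h : u ≤ a
  · simp [downStep, h, h.trans hab]
  · simp [downStep, h]

theorem dual_upStep (k : ℤ) : dual g (upStep k) = !g (downStep (k - 1)) := by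
  have : (fun s => !upStep k s) = downStep (k - 1) := by
    funext s
    by_cases h : k ≤ s <;> simp [upStep, downStep, h]; omega
  rw [dual, this]

theorem dual_downStep (k : ℤ) : dual g (downStep k) = !g (upStep (k + 1)) := by
  have : (fun s => !downStep k s) = upStep (k + 1) := by
    funext s
    by_cases h : s ≤ k <;> simp [upStep, downStep, h]; omega
  rw [dual, this]

section Survival

variable {r : ℕ} {k : ℤ}

theorem block_shift (hU : HasNeighborhood U g) (hg : Monotone g)
    (hr : ∀ u ∈ U, -(r : ℤ) ≤ u ∧ u ≤ r)
    (hup : g (upStep k) = true) (hdown : g (downStep k) = true)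
    {ξ : ℤ → Bool} {c : ℤ} (hξ : Icc c (c + 2 * r) ⊆ {y | ξ y = true}) :
    Icc (c - k) (c - k + 2 * r) ⊆ {y | transOp1 g ξ y = true} := by
  rintro x ⟨hx₁, hx₂⟩
  apply Bool.eq_true_of_true_le
  rcases le_total x (c + r) with hx | hx
  · refine hup ▸ hU.apply_le_apply hg fun u hu => ?_
    by_cases hku : k ≤ u
    · have : ξ (x + u) = true := hξ ⟨by omega, by have := (hr u hu).2; omega⟩
      simp [this]
    · simp [upStep, hku]
  · refine hdown ▸ hU.apply_le_apply hg fun u hu => ?_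
    by_cases huk : u ≤ k
    · have : ξ (x + u) = true := hξ ⟨by have := (hr u hu).1; omega, by omega⟩
      simp [this]
    · simp [downStep, huk]

theorem block_iterate (hU : HasNeighborhood U g) (hg : Monotone g)
    (hr : ∀ u ∈ U, -(r : ℤ) ≤ u ∧ u ≤ r)
    (hup : g (upStep k) = true) (hdown : g (downStep k) = true)
    {ξ : ℤ → Bool} {c : ℤ} (hξ : Icc c (c + 2 * r) ⊆ {y | ξ y = true}) (t : ℕ) :
    Icc (c - t * k) (c - t * k + 2 * r) ⊆ {y | (transOp1 g)^[t] ξ y = true} := by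
  induction t with
  | zero => simpa using hξ
  | succ t ih =>
    have hshift := block_shift hU hg hr hup hdown ih
    rwa [sub_sub, ← add_one_mul, ← Nat.cast_succ, ← iterate_succ_apply' (transOp1 g)] at hshift

theorem not_isEroder_of_upStep_of_downStep (hU : HasNeighborhood U g) (hg : Monotone g)
    (hup : g (upStep k) = true) (hdown : g (downStep k) = true) : ¬ IsEroder g := by
  intro herode
  obtain ⟨r, hr⟩ := exists_radius U
  let block : ℤ → Bool := fun y => decide (y ∈ Icc 0 (2 * (r : ℤ)))
  have hblock : Icc 0 (0 + 2 * (r : ℤ)) ⊆ {y | block y = true} := fun y hy => by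
    simpa [block] using hy
  obtain ⟨t, ht⟩ := herode block ((finite_Icc _ _).subset fun y hy => by simpa [block] using hy)
  have hsurv := block_iterate hU hg hr hup hdown hblock t
  simpa [ht] using hsurv (left_mem_Icc.2 (by omega))

end Survival

theorem exists_upStep_eq_true_and_eq_false (hU : HasNeighborhood U g)
    (hzero : g (fun _ => false) = false) (hone : g (fun _ => true) = true) :
    ∃ k, g (upStep k) = true ∧ g (upStep (k + 1)) = false := by
  obtain ⟨r, hr⟩ := exists_radius U
  have hbdd : ∀ k, g (upStep k) = true → k ≤ r := fun k hk => by
    by_contra! hrk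
    have : g (upStep k) = g (fun _ => false) :=
      hU _ _ fun u hu => by have := (hr u hu).2; simp [upStep]; omega
    rw [this, hzero] at hk
    cases hk
  have hinh : g (upStep (-r)) = true :=
    hone ▸ hU _ _ fun u hu => by simp [upStep, (hr u hu).1]
  obtain ⟨k, hk, hmax⟩ := Int.exists_greatest_of_bdd ⟨r, hbdd⟩ ⟨-r, hinh⟩
  exact ⟨k, hk, by simpa using mt (hmax (k + 1)) (by omega)⟩

end CellularAutomaton

open CellularAutomaton in
/-- In one dimension, no monotone binary cellular automaton and its dual are both
eroders: if a monotone automaton with finite neighborhood, `g(all-zero) = 0` and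
`g(all-one) = 1`, is an eroder, then its dual `g*(u) = 1 − g(1 − u)` is not an eroder. -/
theorem one_dim_dual_not_eroder (U : Finset ℤ) (g : (ℤ → Bool) → Bool)
    (hloc : ∀ ξ ξ' : ℤ → Bool, (∀ u ∈ U, ξ u = ξ' u) → g ξ = g ξ')
    (hmono : Monotone g)
    (hzero : g (fun _ => false) = false)
    (hone : g (fun _ => true) = true)
    (herode : ∀ ξ : ℤ → Bool, Set.Finite {x | ξ x = true} →
      ∃ t : ℕ, (transOp1 g)^[t] ξ = fun _ => false) :
    ¬ (∀ ξ : ℤ → Bool, Set.Finite {x | ξ x = true} →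
        ∃ t : ℕ, (transOp1 (fun u => !g (fun s => !u s)))^[t] ξ = fun _ => false) := by
  obtain ⟨k, hup, hup₁⟩ := exists_upStep_eq_true_and_eq_false hloc hzero hone
  have hdown : g (downStep k) = false := by
    by_contra hdown
    exact not_isEroder_of_upStep_of_downStep hloc hmono hup (by simpa using hdown) herode
  have hdown₁ : g (downStep (k - 1)) = false :=
    Bool.eq_false_of_le_false (hdown ▸ hmono (downStep_mono (by omega)))
  have hdual_up : dual g (upStep k) = true := by rw [dual_upStep, hdown₁]; rfl
  have hdual_down : dual g (downStep k) = true := by rw [dual_downStep, hup₁]; rfl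
  exact not_isEroder_of_upStep_of_downStep (HasNeighborhood.dual hloc) (monotone_dual hmono)
    hdual_up hdual_down
end
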